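/- arXiv:2407.08592 — 5 statements merged into one kernel-verified Lean document; each statement's English description precedes it below -/
import Mathlib

section
/- Let K ≥ 1, let A be an invertible K×K real matrix that is uniformly exponentially stable, and let β be a 1×K row vector. Then the function t ↦ t·(−β·exp(t•A)·A·𝟙) is integrable on [0,∞) and ∫_0^∞ t·(−β·exp(t•A)·A·𝟙) dt = −β·A⁻¹·𝟙. (This is the mean of a phase-type distribution with density f(t) = −β·exp(t•A)·A·𝟙.) -/
/-!
The function `G(u) = u·β e^{uA} M - β e^{uA} A⁻¹ M` is a primitive of `u·β e^{uA} A M`.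
Exponential stability makes every matrix coefficient of `e^{uA}` decay like `e^{-αu}`, so the
integrand is integrable on `(0, ∞)` and `G(u) → 0`; hence the integral equals `-G(0) = β A⁻¹ M`.
-/

open MeasureTheory Matrix

/-- The all-ones column vector. -/
noncomputable def onesCol (K : ℕ) : Matrix (Fin K) (Fin 1) ℝ := Matrix.of fun _ _ => 1

/-- A square matrix `A` is uniformly exponentially stable if `‖exp(t•A)‖ ≤ C·exp(-α·t)`
for all `t ≥ 0` (here in the entrywise sup norm). -/
def UnifExpStable {K : ℕ} (A : Matrix (Fin K) (Fin K) ℝ) : Prop :=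
  ∃ C > (0:ℝ), ∃ α > (0:ℝ), ∀ t ≥ (0:ℝ), ∀ i j,
    |NormedSpace.exp (t • A) i j| ≤ C * Real.exp (-α * t)

open Filter Set Topology

section ExpDecay

variable {f : ℝ → ℝ} {D α : ℝ}

theorem tendsto_rpow_mul_atTop_nhds_zero_of_abs_le_exp (s : ℝ) (hα : 0 < α)
    (hf : ∀ t ≥ 0, |f t| ≤ D * Real.exp (-α * t)) :
    Tendsto (fun t => t ^ s * f t) atTop (𝓝 0) := by
  have hmajorant : Tendsto (fun t => D * (t ^ s * Real.exp (-α * t))) atTop (𝓝 0) := by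
    simpa using (tendsto_rpow_mul_exp_neg_mul_atTop_nhds_zero s α hα).const_mul D
  refine squeeze_zero_norm' ?_ hmajorant
  filter_upwards [eventually_ge_atTop 0] with t ht
  rw [Real.norm_eq_abs, abs_mul, abs_of_nonneg (Real.rpow_nonneg ht s), mul_left_comm]
  exact mul_le_mul_of_nonneg_left (hf t ht) (Real.rpow_nonneg ht s)

theorem integrableOn_Ioi_rpow_mul_of_abs_le_exp {s : ℝ} (hs : -1 < s) (hα : 0 < α)
    (hf_meas : AEStronglyMeasurable f (volume.restrict (Ioi 0)))
    (hf : ∀ t > 0, |f t| ≤ D * Real.exp (-α * t)) :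
    IntegrableOn (fun t => t ^ s * f t) (Ioi 0) := by
  have hmajorant := (integrableOn_rpow_mul_exp_neg_mul_rpow hs one_pos hα).const_mul D
  refine Integrable.mono' hmajorant
    ((measurable_id.pow_const s).aestronglyMeasurable.mul hf_meas) ?_
  filter_upwards [ae_restrict_mem measurableSet_Ioi] with t ht
  rw [Real.norm_eq_abs, abs_mul, abs_of_pos (Real.rpow_pos_of_pos ht s), Real.rpow_one,
    mul_left_comm]
  exact mul_le_mul_of_nonneg_left (hf t ht) (Real.rpow_nonneg ht.le s)

end ExpDecay

theorem abs_mul_mul_apply_le {l m m' n : Type*} [Fintype m] [Fintype m']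
    (β : Matrix l m ℝ) (E : Matrix m m' ℝ) (M : Matrix m' n ℝ) (i : l) (j : n) {c : ℝ}
    (hE : ∀ a b, |E a b| ≤ c) :
    |(β * E * M) i j| ≤ (∑ a, ∑ b, |β i a| * |M b j|) * c := by
  have hexpand : (β * E * M) i j = ∑ a, ∑ b, β i a * E a b * M b j := by
    simp only [Matrix.mul_apply, Finset.sum_mul]
    exact Finset.sum_comm
  rw [hexpand, Finset.sum_mul]
  refine (Finset.abs_sum_le_sum_abs _ _).trans (Finset.sum_le_sum fun a _ => ?_)
  rw [Finset.sum_mul]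
  refine (Finset.abs_sum_le_sum_abs _ _).trans (Finset.sum_le_sum fun b _ => ?_)
  rw [abs_mul, abs_mul, mul_right_comm |β i a| |M b j| c]
  gcongr
  exact hE a b

section MatrixExp

attribute [local instance] Matrix.linftyOpNormedAddCommGroup Matrix.linftyOpNormedRing
  Matrix.linftyOpNormedAlgebra

variable {l m n : Type*} [Fintype m] [DecidableEq m]

theorem hasDerivAt_mul_exp_smul_mul_apply (β : Matrix l m ℝ) (A : Matrix m m ℝ)
    (M : Matrix m n ℝ) (i : l) (j : n) (t : ℝ) :
    HasDerivAt (fun u : ℝ => (β * NormedSpace.exp (u • A) * M) i j)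
      ((β * NormedSpace.exp (t • A) * A * M) i j) t := by
  let L : Matrix m m ℝ →ₗ[ℝ] ℝ := entryLinearMap ℝ ℝ i j ∘ₗ mulRightLinearMap l ℝ M ∘ₗ
    mulLeftLinearMap m ℝ β
  have h := L.toContinuousLinearMap.hasFDerivAt.comp_hasDerivAt t (hasDerivAt_exp_smul_const A t)
  exact h.congr_deriv (by rw [Matrix.mul_assoc β]; rfl)

theorem hasDerivAt_mul_exp_smul_mul_apply_sub (β : Matrix l m ℝ) (A : Matrix m m ℝ)
    [Invertible A] (M : Matrix m n ℝ) (i : l) (j : n) (t : ℝ) :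
    HasDerivAt
      (fun u : ℝ => u * (β * NormedSpace.exp (u • A) * M) i j -
        (β * NormedSpace.exp (u • A) * (A⁻¹ * M)) i j)
      (t * (β * NormedSpace.exp (t • A) * A * M) i j) t := by
  refine (((hasDerivAt_id t).mul (hasDerivAt_mul_exp_smul_mul_apply β A M i j t)).sub
    (hasDerivAt_mul_exp_smul_mul_apply β A (A⁻¹ * M) i j t)).congr_deriv ?_
  simp only [Matrix.mul_assoc, Matrix.mul_inv_cancel_left_of_invertible]
  simp

variable {C α : ℝ} {A : Matrix m m ℝ}
  (hdecay : ∀ t ≥ 0, ∀ a b, |NormedSpace.exp (t • A) a b| ≤ C * Real.exp (-α * t))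
include hdecay

theorem abs_mul_exp_smul_mul_apply_le (β : Matrix l m ℝ) (M : Matrix m n ℝ) (i : l) (j : n) :
    ∀ t ≥ 0, |(β * NormedSpace.exp (t • A) * M) i j| ≤
      (∑ a, ∑ b, |β i a| * |M b j|) * C * Real.exp (-α * t) := fun t ht =>
  (abs_mul_mul_apply_le β _ M i j (hdecay t ht)).trans_eq (mul_assoc _ _ _).symm

theorem integrableOn_Ioi_mul_mul_exp_smul_mul_apply (hα : 0 < α) (β : Matrix l m ℝ)
    (M : Matrix m n ℝ) (i : l) (j : n) :
    IntegrableOn (fun t => t * (β * NormedSpace.exp (t • A) * A * M) i j) (Ioi 0) := by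
  have hcont : Continuous fun t : ℝ => (β * NormedSpace.exp (t • A) * (A * M)) i j :=
    continuous_iff_continuousAt.2 fun t =>
      (hasDerivAt_mul_exp_smul_mul_apply β A (A * M) i j t).continuousAt
  have h := integrableOn_Ioi_rpow_mul_of_abs_le_exp (s := 1) (by norm_num) hα
    hcont.aestronglyMeasurable fun t ht =>
      abs_mul_exp_smul_mul_apply_le hdecay β (A * M) i j t ht.le
  simpa only [Real.rpow_one, Matrix.mul_assoc] using h

theorem integral_Ioi_mul_mul_exp_smul_mul_apply (hα : 0 < α) [Invertible A]
    (β : Matrix l m ℝ) (M : Matrix m n ℝ) (i : l) (j : n) :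
    ∫ t in Ioi 0, t * (β * NormedSpace.exp (t • A) * A * M) i j = (β * A⁻¹ * M) i j := by
  have hlim : Tendsto (fun u => u * (β * NormedSpace.exp (u • A) * M) i j -
      (β * NormedSpace.exp (u • A) * (A⁻¹ * M)) i j) atTop (𝓝 0) := by
    simpa using (tendsto_rpow_mul_atTop_nhds_zero_of_abs_le_exp 1 hα
      (abs_mul_exp_smul_mul_apply_le hdecay β M i j)).sub
      (tendsto_rpow_mul_atTop_nhds_zero_of_abs_le_exp 0 hα
        (abs_mul_exp_smul_mul_apply_le hdecay β (A⁻¹ * M) i j))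
  rw [integral_Ioi_of_hasDerivAt_of_tendsto'
    (fun t _ => hasDerivAt_mul_exp_smul_mul_apply_sub β A M i j t)
    (integrableOn_Ioi_mul_mul_exp_smul_mul_apply hdecay hα β M i j) hlim]
  simp [Matrix.mul_assoc]

end MatrixExp

theorem phase_type_first_moment_general (K : ℕ)
    (A : Matrix (Fin K) (Fin K) ℝ) (hA : Invertible A) (hstab : UnifExpStable A)
    (β : Matrix (Fin 1) (Fin K) ℝ) :
    IntegrableOn
      (fun t : ℝ => t * (-(β * NormedSpace.exp (t • A) * A * onesCol K)) 0 0)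
      (Set.Ici 0) ∧
    ∫ t in Set.Ici (0:ℝ), t * (-(β * NormedSpace.exp (t • A) * A * onesCol K)) 0 0
      = (-(β * A⁻¹ * onesCol K)) 0 0 := by
  obtain ⟨C, -, α, hα, hdecay⟩ := hstab
  have hneg : (fun t : ℝ => t * (-(β * NormedSpace.exp (t • A) * A * onesCol K)) 0 0) =
      fun t => -(t * (β * NormedSpace.exp (t • A) * A * onesCol K) 0 0) := by
    funext t
    rw [Matrix.neg_apply, mul_neg]
  rw [hneg, integrableOn_Ici_iff_integrableOn_Ioi, integral_Ici_eq_integral_Ioi, integral_neg,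
    Matrix.neg_apply, integral_Ioi_mul_mul_exp_smul_mul_apply hdecay hα]
  exact ⟨(integrableOn_Ioi_mul_mul_exp_smul_mul_apply hdecay hα β _ 0 0).neg, rfl⟩

/-- Mean of a phase-type distribution: `∫₀^∞ t·(−β·exp(t•A)·A·𝟙) dt = −β·A⁻¹·𝟙`. -/
theorem phase_type_first_moment (K : ℕ) (hK : 1 ≤ K)
    (A : Matrix (Fin K) (Fin K) ℝ) (hA : Invertible A) (hstab : UnifExpStable A)
    (β : Matrix (Fin 1) (Fin K) ℝ) :
    IntegrableOn
      (fun t : ℝ => t * (-(β * NormedSpace.exp (t • A) * A * onesCol K)) 0 0)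
      (Set.Ici 0) ∧
    ∫ t in Set.Ici (0:ℝ), t * (-(β * NormedSpace.exp (t • A) * A * onesCol K)) 0 0
      = (-(β * A⁻¹ * onesCol K)) 0 0 :=
  phase_type_first_moment_general K A hA hstab β
end

section
/- Let K ≥ 1, let A be an invertible K×K real matrix, let β be a 1×K row vector, and let γₗ ≤ γᵤ be real numbers. Then ∫_{γₗ}^{γᵤ} (−t·β·exp((t−γₗ)•A)·A·𝟙) dt = −β·exp((γᵤ−γₗ)•A)·(γᵤ·A − I)·A⁻¹·𝟙 + β·(γₗ·A − I)·A⁻¹·𝟙. (This is the finite-interval first-moment integral I₁(β, A, γₗ, γᵤ) used in the analysis of multi-regime phase-type distributions.) -/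
/-!
Since `A` commutes with `s • A - 1`, the product rule shows that
`s ↦ exp ((s - γₗ) • A) * (s • A - 1) * A⁻¹` has derivative `s • (exp ((s - γₗ) • A) * A)`.
Applying the linear functional `M ↦ (β * M * 𝟙) 0 0` and the fundamental theorem of calculus
gives the formula.
-/

open MeasureTheory Matrix

section ExpAntiderivative

variable {𝔸 : Type*} [NormedRing 𝔸] [NormedAlgebra ℝ 𝔸] [CompleteSpace 𝔸]

theorem hasDerivAt_exp_sub_smul (A : 𝔸) (c t : ℝ) :
    HasDerivAt (fun s : ℝ => NormedSpace.exp ((s - c) • A)) (NormedSpace.exp ((t - c) • A) * A) t := by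
  simpa using (hasDerivAt_exp_smul_const (𝕂 := ℝ) A (t - c)).comp_sub_const t c

theorem hasDerivAt_exp_sub_smul_mul_smul_sub_one_mul {A B : 𝔸} (hAB : A * B = 1) (c t : ℝ) :
    HasDerivAt (fun s : ℝ => NormedSpace.exp ((s - c) • A) * (s • A - 1) * B)
      (t • (NormedSpace.exp ((t - c) • A) * A)) t := by
  have h := ((hasDerivAt_exp_sub_smul A c t).mul
    (((hasDerivAt_id t).smul_const A).sub_const 1)).mul_const B
  refine h.congr_deriv ?_
  have hcomm : A * (t • A - 1) = (t • A - 1) * A := by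
    rw [mul_sub, sub_mul, mul_smul_comm, smul_mul_assoc, mul_one, one_mul]
  simp only [id, one_smul]
  rw [add_mul, mul_assoc _ A, hcomm, ← mul_assoc, mul_assoc _ A B, mul_assoc _ A B, hAB]
  simp only [mul_one, mul_sub, mul_smul_comm, sub_add_cancel]

theorem continuous_smul_exp_sub_smul_mul (A : 𝔸) (c : ℝ) :
    Continuous fun t : ℝ => t • (NormedSpace.exp ((t - c) • A) * A) :=
  continuous_id.smul (continuous_iff_continuousAt.2 fun t =>
    (hasDerivAt_exp_sub_smul A c t).continuousAt.mul continuousAt_const)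

end ExpAntiderivative

section MatrixIntegral

variable {n : Type*} [Fintype n] [DecidableEq n]

def sandwich (β : Matrix (Fin 1) n ℝ) (v : Matrix n (Fin 1) ℝ) : Matrix n n ℝ →ₗ[ℝ] ℝ where
  toFun M := (β * M * v) 0 0
  map_add' M N := by simp only [Matrix.mul_add, Matrix.add_mul, Matrix.add_apply]
  map_smul' c M := by
    simp only [Matrix.mul_smul, Matrix.smul_mul, Matrix.smul_apply, smul_eq_mul, RingHom.id_apply]

theorem intervalIntegral_mul_sandwich_exp_sub_smul_mul (A : Matrix n n ℝ) [Invertible A]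
    (β : Matrix (Fin 1) n ℝ) (v : Matrix n (Fin 1) ℝ) (a b c : ℝ) :
    ∫ t in a..b, t * (β * NormedSpace.exp ((t - c) • A) * A * v) 0 0
      = (β * NormedSpace.exp ((b - c) • A) * (b • A - 1 : Matrix n n ℝ) * A⁻¹ * v) 0 0
        - (β * NormedSpace.exp ((a - c) • A) * (a • A - 1 : Matrix n n ℝ) * A⁻¹ * v) 0 0 := by
  let : NormedRing (Matrix n n ℝ) := Matrix.linftyOpNormedRing
  let : NormedAlgebra ℝ (Matrix n n ℝ) := Matrix.linftyOpNormedAlgebra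
  set L := LinearMap.toContinuousLinearMap (sandwich β v)
  have hL (M : Matrix n n ℝ) : L M = (β * M * v) 0 0 := rfl
  have hintegrand (t : ℝ) : t * (β * NormedSpace.exp ((t - c) • A) * A * v) 0 0
      = L (t • (NormedSpace.exp ((t - c) • A) * A)) := by
    rw [map_smul, hL, smul_eq_mul, Matrix.mul_assoc β]
  have hderiv (t : ℝ) : HasDerivAt
      (fun s => (β * NormedSpace.exp ((s - c) • A) * (s • A - 1 : Matrix n n ℝ) * A⁻¹ * v) 0 0)
      (t * (β * NormedSpace.exp ((t - c) • A) * A * v) 0 0) t := by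
    have := L.hasFDerivAt.comp_hasDerivAt t
      (hasDerivAt_exp_sub_smul_mul_smul_sub_one_mul (mul_inv_of_invertible A) c t)
    rw [hintegrand]
    refine this.congr_of_eventuallyEq (.of_forall fun s => ?_)
    simp only [Function.comp_apply, hL, Matrix.mul_assoc]
    -- the sides differ only in whether `-` and `1` come from `linftyOpNormedRing` or from `Matrix`
    rfl
  have hcont : Continuous fun t => t * (β * NormedSpace.exp ((t - c) • A) * A * v) 0 0 := by
    simp only [hintegrand]
    exact L.continuous.comp (continuous_smul_exp_sub_smul_mul A c)
  exact intervalIntegral.integral_eq_sub_of_hasDerivAt (fun t _ => hderiv t)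
    (hcont.intervalIntegrable a b)

end MatrixIntegral

theorem mrph_I1_general (K : ℕ)
    (A : Matrix (Fin K) (Fin K) ℝ) (hA : Invertible A)
    (β : Matrix (Fin 1) (Fin K) ℝ) (γl γu : ℝ) :
    ∫ t in γl..γu, -(t * (β * NormedSpace.exp ((t - γl) • A) * A * onesCol K) 0 0)
      = (-(β * NormedSpace.exp ((γu - γl) • A) * (γu • A - (1 : Matrix (Fin K) (Fin K) ℝ)) * A⁻¹ * onesCol K)) 0 0
        + (β * (γl • A - (1 : Matrix (Fin K) (Fin K) ℝ)) * A⁻¹ * onesCol K) 0 0 := by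
  simp only [intervalIntegral.integral_neg, intervalIntegral_mul_sandwich_exp_sub_smul_mul, sub_self,
    zero_smul, NormedSpace.exp_zero, Matrix.mul_one, Matrix.neg_apply]
  ring

/-- The finite-interval first-moment integral `I₁(β, A, γₗ, γᵤ)` of a multi-regime
phase-type distribution. -/
theorem mrph_I1 (K : ℕ) (hK : 1 ≤ K)
    (A : Matrix (Fin K) (Fin K) ℝ) (hA : Invertible A)
    (β : Matrix (Fin 1) (Fin K) ℝ) (γl γu : ℝ) (hγ : γl ≤ γu) :
    ∫ t in γl..γu, -(t * (β * NormedSpace.exp ((t - γl) • A) * A * onesCol K) 0 0)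
      = (-(β * NormedSpace.exp ((γu - γl) • A) * (γu • A - (1 : Matrix (Fin K) (Fin K) ℝ)) * A⁻¹ * onesCol K)) 0 0
        + (β * (γl • A - (1 : Matrix (Fin K) (Fin K) ℝ)) * A⁻¹ * onesCol K) 0 0 :=
  mrph_I1_general K A hA β γl γu
end

section
/- Let K ≥ 1 and M ≥ 1, let 0 = γ₁ ≤ γ₂ ≤ ⋯ ≤ γ_M be real numbers, and let A₁, …, A_M be K×K real matrices with A_M uniformly exponentially stable. Let β₁ be a 1×K row vector with β₁·𝟙 = 1, and define recursively β_{m+1} = β_m·exp((γ_{m+1}−γ_m)•A_m) for 1 ≤ m ≤ M−1. Then the piecewise multi-regime phase-type density integrates to one: Σ_{m=1}^{M−1} ∫_{γ_m}^{γ_{m+1}} (−β_m·exp((t−γ_m)•A_m)·A_m·𝟙) dt + ∫_{γ_M}^{∞} (−β_M·exp((t−γ_M)•A_M)·A_M·𝟙) dt = 1. -/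
open MeasureTheory Matrix

/-!
On each regime the density is `-d/dt` of the survival function `β_m exp((t - γ_m) A_m) 𝟙`, so
the integral over `[γ_m, γ_{m+1}]` is `β_m 𝟙 - β_{m+1} 𝟙` by the recursion for `β`. Exponential
stability of `A_M` makes the last survival function vanish at infinity, so the tail integral is
`β_M 𝟙`, and the sum telescopes to `β_1 𝟙 = 1`.
-/

open Filter Topology Set NormedSpace

namespace Matrix

variable {l n p q : Type*} [Fintype n]

theorem abs_mul_mul_apply_le [Fintype q] (b : Matrix l n ℝ) (E : Matrix n q ℝ)
    (c : Matrix q p ℝ) (i : l) (j : p) {R : ℝ} (hE : ∀ k k', |E k k'| ≤ R) :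
    |(b * E * c) i j| ≤ (∑ k, ∑ k', |b i k| * |c k' j|) * R := by
  have hexpand : (b * E * c) i j = ∑ k, ∑ k', b i k * E k k' * c k' j := by
    simp only [mul_apply, Finset.sum_mul]
    exact Finset.sum_comm
  calc |(b * E * c) i j| ≤ ∑ k, ∑ k', |b i k * E k k' * c k' j| := by
        rw [hexpand]
        exact (Finset.abs_sum_le_sum_abs _ _).trans
          (Finset.sum_le_sum fun k _ => Finset.abs_sum_le_sum_abs _ _)
    _ ≤ ∑ k, ∑ k', |b i k| * |c k' j| * R := by
        gcongr with k _ k' _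
        rw [abs_mul, abs_mul, mul_right_comm]
        gcongr
        exact hE k k'
    _ = (∑ k, ∑ k', |b i k| * |c k' j|) * R := by simp only [Finset.sum_mul]

variable [DecidableEq n]

section Deriv

attribute [local instance] Matrix.linftyOpNormedRing Matrix.linftyOpNormedAlgebra

theorem hasDerivAt_mul_exp_sub_smul_mul_apply (b : Matrix l n ℝ) (A : Matrix n n ℝ)
    (c : Matrix n p ℝ) (s t : ℝ) (i : l) (j : p) :
    HasDerivAt (fun u => (b * exp ((u - s) • A) * c) i j)
      ((b * exp ((t - s) • A) * A * c) i j) t := by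
  let L : Matrix n n ℝ →L[ℝ] ℝ := (entryLinearMap ℝ ℝ i j ∘ₗ mulRightLinearMap l ℝ c ∘ₗ
    mulLeftLinearMap n ℝ b).toContinuousLinearMap
  have hexp := (hasDerivAt_exp_smul_const (𝕂 := ℝ) A (t - s)).scomp t
    ((hasDerivAt_id t).sub_const s)
  rw [one_smul] at hexp
  have hL : L (exp ((t - s) • A) * A) = (b * exp ((t - s) • A) * A * c) i j := by
    simp [L, Matrix.mul_assoc]
  exact hL ▸ L.hasFDerivAt.comp_hasDerivAt t hexp

end Deriv

theorem continuous_mul_exp_sub_smul_mul_apply (b : Matrix l n ℝ) (A : Matrix n n ℝ)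
    (c : Matrix n p ℝ) (s : ℝ) (i : l) (j : p) :
    Continuous fun t => (b * exp ((t - s) • A) * c) i j :=
  continuous_iff_continuousAt.2 fun t =>
    (hasDerivAt_mul_exp_sub_smul_mul_apply b A c s t i j).continuousAt

theorem intervalIntegral_mul_exp_sub_smul_mul_mul_apply (b : Matrix l n ℝ) (A : Matrix n n ℝ)
    (c : Matrix n p ℝ) (s u : ℝ) (i : l) (j : p) :
    ∫ t in s..u, (b * exp ((t - s) • A) * A * c) i j
      = (b * exp ((u - s) • A) * c) i j - (b * c) i j := by
  have hcont := continuous_mul_exp_sub_smul_mul_apply b A (A * c) s i j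
  simp_rw [← Matrix.mul_assoc] at hcont
  rw [intervalIntegral.integral_eq_sub_of_hasDerivAt
    (fun t _ => hasDerivAt_mul_exp_sub_smul_mul_apply b A c s t i j)
    (hcont.intervalIntegrable _ _)]
  simp

end Matrix

namespace UnifExpStable

variable {l p : Type*} {K : ℕ} {A : Matrix (Fin K) (Fin K) ℝ}

theorem exists_abs_mul_exp_sub_smul_mul_apply_le (hA : UnifExpStable A) :
    ∃ α > 0, ∀ (b : Matrix l (Fin K) ℝ) (c : Matrix (Fin K) p ℝ) (s : ℝ) (i : l) (j : p),
      ∃ D, ∀ t ≥ s, |(b * exp ((t - s) • A) * c) i j| ≤ D * Real.exp (-α * t) := by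
  obtain ⟨C, -, α, hα, hbound⟩ := hA
  refine ⟨α, hα, fun b c s i j => ⟨(∑ k, ∑ k', |b i k| * |c k' j|) * C * Real.exp (α * s),
    fun t ht => ?_⟩⟩
  calc |(b * exp ((t - s) • A) * c) i j|
      ≤ (∑ k, ∑ k', |b i k| * |c k' j|) * (C * Real.exp (-α * (t - s))) :=
        Matrix.abs_mul_mul_apply_le b _ c i j (hbound (t - s) (sub_nonneg.2 ht))
    _ = (∑ k, ∑ k', |b i k| * |c k' j|) * C * Real.exp (α * s) * Real.exp (-α * t) := by
        rw [show -α * (t - s) = α * s + -α * t by ring, Real.exp_add]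
        ring

theorem tendsto_mul_exp_sub_smul_mul_apply (hA : UnifExpStable A) (b : Matrix l (Fin K) ℝ)
    (c : Matrix (Fin K) p ℝ) (s : ℝ) (i : l) (j : p) :
    Tendsto (fun t => (b * exp ((t - s) • A) * c) i j) atTop (𝓝 0) := by
  obtain ⟨α, hα, hdecay⟩ := hA.exists_abs_mul_exp_sub_smul_mul_apply_le
  obtain ⟨D, hD⟩ := hdecay b c s i j
  have hexp : Tendsto (fun t => Real.exp (-α * t)) atTop (𝓝 0) :=
    Real.tendsto_exp_atBot.comp (tendsto_id.const_mul_atTop_of_neg (neg_lt_zero.2 hα))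
  refine squeeze_zero_norm' ?_ (by simpa only [mul_zero] using hexp.const_mul D)
  filter_upwards [eventually_ge_atTop s] with t ht using hD t ht

theorem integrableOn_Ioi_mul_exp_sub_smul_mul_apply (hA : UnifExpStable A)
    (b : Matrix l (Fin K) ℝ) (c : Matrix (Fin K) p ℝ) (s : ℝ) (i : l) (j : p) :
    IntegrableOn (fun t => (b * exp ((t - s) • A) * c) i j) (Ioi s) := by
  obtain ⟨α, hα, hdecay⟩ := hA.exists_abs_mul_exp_sub_smul_mul_apply_le
  obtain ⟨D, hD⟩ := hdecay b c s i j
  refine ((exp_neg_integrableOn_Ioi s hα).const_mul D).mono'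
    (Matrix.continuous_mul_exp_sub_smul_mul_apply b A c s i j).aestronglyMeasurable ?_
  filter_upwards [ae_restrict_mem measurableSet_Ioi] with t ht
  exact hD t (le_of_lt ht)

theorem integral_Ioi_mul_exp_sub_smul_mul_mul_apply (hA : UnifExpStable A)
    (b : Matrix l (Fin K) ℝ) (c : Matrix (Fin K) p ℝ) (s : ℝ) (i : l) (j : p) :
    ∫ t in Ioi s, (b * exp ((t - s) • A) * A * c) i j = -(b * c) i j := by
  have hint := hA.integrableOn_Ioi_mul_exp_sub_smul_mul_apply b (A * c) s i j
  simp_rw [← Matrix.mul_assoc] at hint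
  rw [integral_Ioi_of_hasDerivAt_of_tendsto'
    (fun t _ => Matrix.hasDerivAt_mul_exp_sub_smul_mul_apply b A c s t i j) hint
    (hA.tendsto_mul_exp_sub_smul_mul_apply b c s i j)]
  simp

end UnifExpStable

theorem mrph_density_integrates_to_one_general (K M : ℕ) (hM : 1 ≤ M)
    (γ : ℕ → ℝ) (A : ℕ → Matrix (Fin K) (Fin K) ℝ) (β : ℕ → Matrix (Fin 1) (Fin K) ℝ)
    (hstab : UnifExpStable (A M))
    (hβ1 : (β 1 * onesCol K) 0 0 = 1)
    (hβrec : ∀ m, 1 ≤ m → m + 1 ≤ M →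
      β (m + 1) = β m * NormedSpace.exp ((γ (m + 1) - γ m) • A m)) :
    (∑ m ∈ Finset.Icc 1 (M - 1),
        ∫ t in (γ m)..(γ (m + 1)),
          (-(β m * NormedSpace.exp ((t - γ m) • A m) * A m * onesCol K)) 0 0)
      + ∫ t in Set.Ici (γ M),
          (-(β M * NormedSpace.exp ((t - γ M) • A M) * A M * onesCol K)) 0 0
      = 1 := by
  set S : ℕ → ℝ := fun m => (β m * onesCol K) 0 0 with hS
  have hregime : ∀ m ∈ Finset.Ico 1 M, ∫ t in (γ m)..(γ (m + 1)),
      (-(β m * exp ((t - γ m) • A m) * A m * onesCol K)) 0 0 = -(S (m + 1) - S m) := by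
    intro m hm
    obtain ⟨hm1, hmM⟩ := Finset.mem_Ico.1 hm
    simp only [Matrix.neg_apply, intervalIntegral.integral_neg,
      Matrix.intervalIntegral_mul_exp_sub_smul_mul_mul_apply, hS, hβrec m hm1 hmM]
  rw [Finset.Icc_sub_one_right_eq_Ico_of_not_isMin (by simpa using Nat.one_le_iff_ne_zero.1 hM),
    Finset.sum_congr rfl hregime, Finset.sum_neg_distrib, Finset.sum_Ico_sub S hM,
    integral_Ici_eq_integral_Ioi]
  simp only [Matrix.neg_apply, integral_neg, hstab.integral_Ioi_mul_exp_sub_smul_mul_mul_apply,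
    hS, hβ1]
  ring

/-- The multi-regime phase-type density integrates to one. -/
theorem mrph_density_integrates_to_one (K M : ℕ) (hK : 1 ≤ K) (hM : 1 ≤ M)
    (γ : ℕ → ℝ) (A : ℕ → Matrix (Fin K) (Fin K) ℝ) (β : ℕ → Matrix (Fin 1) (Fin K) ℝ)
    (hγ1 : γ 1 = 0)
    (hγmono : ∀ m, 1 ≤ m → m + 1 ≤ M → γ m ≤ γ (m + 1))
    (hstab : UnifExpStable (A M))
    (hβ1 : (β 1 * onesCol K) 0 0 = 1)
    (hβrec : ∀ m, 1 ≤ m → m + 1 ≤ M →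
      β (m + 1) = β m * NormedSpace.exp ((γ (m + 1) - γ m) • A m)) :
    (∑ m ∈ Finset.Icc 1 (M - 1),
        ∫ t in (γ m)..(γ (m + 1)),
          (-(β m * NormedSpace.exp ((t - γ m) • A m) * A m * onesCol K)) 0 0)
      + ∫ t in Set.Ici (γ M),
          (-(β M * NormedSpace.exp ((t - γ M) • A M) * A M * onesCol K)) 0 0
      = 1 :=
  mrph_density_integrates_to_one_general K M hM γ A β hstab hβ1 hβrec
end

section
/- Let N ≥ 2 be an integer, let σ > 0, μ > 0, and τ ≥ 0 be real numbers, and set K = N−1. Let A₁ = −(N·σ/(N−1))·(I − (1/N)·J_K) (a K×K matrix), let c = σ/((N−1)·(σ+μ)), and let F = ((1+c)·I − c·J_K)⁻¹ (the matrix (1+c)·I − c·J_K is invertible). Then the expected number of transmissions per cycle for the single-threshold policy on a symmetric N-state source satisfies (1/(N−1))·𝟙ᵀ·exp(τ•A₁)·F·𝟙 = e^{−σ·τ/(N−1)}·(N−1)·(σ+μ)/(σ + μ·(N−1)). -/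
/-!
The all-ones vector `𝟙` is a common eigenvector of every matrix `a • I - b • J_K`, with
eigenvalue `a - b K`, since `J_K 𝟙 = K 𝟙`. Hence `exp (τ • A₁) 𝟙 = e^{-στ/K} 𝟙` and
`F 𝟙 = (1 + c - c K)⁻¹ 𝟙`, and the whole expression collapses to the scalar
`e^{-στ/K} (1 + c - c K)⁻¹ 𝟙ᵀ𝟙 / K`. When `a ≠ 0` and `a - b K ≠ 0`, the matrix
`a • I - b • J_K` has the explicit inverse `a⁻¹ • I + b / (a (a - b K)) • J_K`.
-/

open Matrix

noncomputable def onesRow (K : ℕ) : Matrix (Fin 1) (Fin K) ℝ := Matrix.of fun _ _ => 1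

noncomputable def onesMat (K : ℕ) : Matrix (Fin K) (Fin K) ℝ := Matrix.of fun _ _ => 1

open scoped Norms.Operator in
theorem Matrix.exp_mul_of_mul_eq_smul {𝕂 m n : Type*} [RCLike 𝕂] [Fintype m] [DecidableEq m]
    [Fintype n] {A : Matrix m m 𝕂} {v : Matrix m n 𝕂} {r : 𝕂} (h : A * v = r • v) :
    NormedSpace.exp A * v = NormedSpace.exp r • v := by
  have hpow (k : ℕ) : A ^ k * v = r ^ k • v := by
    induction k with
    | zero => simp
    | succ k ih => rw [pow_succ', Matrix.mul_assoc, ih, Matrix.mul_smul, h, smul_smul, pow_succ]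
  have hA := (NormedSpace.exp_series_hasSum_exp' (𝕂 := 𝕂) A).map (addMonoidHomMulRight v)
    (continuous_id.matrix_mul continuous_const)
  have hr := (NormedSpace.exp_series_hasSum_exp' (𝕂 := 𝕂) r).smul_const v
  refine hA.unique (hr.congr_fun fun k => ?_)
  simp [Matrix.smul_mul, hpow, smul_smul]

theorem Matrix.inv_mul_of_mul_eq_smul {𝕜 n m : Type*} [Field 𝕜] [Fintype n] [DecidableEq n]
    {M : Matrix n n 𝕜} (hM : IsUnit M) {v : Matrix n m 𝕜} {r : 𝕜} (hr : r ≠ 0)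
    (h : M * v = r • v) : M⁻¹ * v = r⁻¹ • v := by
  rw [eq_inv_smul_iff₀ hr, ← Matrix.mul_smul, ← h, ← Matrix.mul_assoc,
    Matrix.nonsing_inv_mul _ ((isUnit_iff_isUnit_det M).mp hM), Matrix.one_mul]

section onesMat

variable {K : ℕ}

theorem onesMat_mul_onesCol : onesMat K * onesCol K = (K : ℝ) • onesCol K := by
  ext i j
  simp [onesMat, onesCol, Matrix.mul_apply]

theorem onesRow_mul_onesCol : (onesRow K * onesCol K) 0 0 = K := by
  simp [onesRow, onesCol, Matrix.mul_apply]

theorem smul_one_sub_smul_onesMat_mul_onesCol (a b : ℝ) :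
    (a • (1 : Matrix (Fin K) (Fin K) ℝ) - b • onesMat K) * onesCol K
      = (a - b * K) • onesCol K := by
  rw [Matrix.sub_mul, Matrix.smul_mul, Matrix.smul_mul, Matrix.one_mul, onesMat_mul_onesCol,
    smul_smul, ← sub_smul]

theorem onesMat_mul_onesMat : onesMat K * onesMat K = (K : ℝ) • onesMat K := by
  ext i j
  simp [onesMat, Matrix.mul_apply]

theorem isUnit_smul_one_sub_smul_onesMat {a b : ℝ} (ha : a ≠ 0) (hab : a - b * K ≠ 0) :
    IsUnit (a • (1 : Matrix (Fin K) (Fin K) ℝ) - b • onesMat K) := by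
  refine (isUnit_iff_isUnit_det _).mpr (isUnit_det_of_right_inverse
    (B := a⁻¹ • (1 : Matrix (Fin K) (Fin K) ℝ) + (b / (a * (a - b * K))) • onesMat K) ?_)
  have hcoeff : b / (a * (a - b * K)) * (a - b * K) = a⁻¹ * b := by field_simp
  rw [Matrix.mul_add, Matrix.mul_smul, Matrix.mul_smul, Matrix.mul_one, Matrix.sub_mul,
    Matrix.smul_mul, Matrix.one_mul, Matrix.smul_mul, onesMat_mul_onesMat, smul_smul,
    ← sub_smul, smul_sub, smul_smul, smul_smul, smul_smul, inv_mul_cancel₀ ha, one_smul,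
    hcoeff, sub_add_cancel]

end onesMat

theorem st_symmetric_transmission_count_general (N : ℕ) (hN : 2 ≤ N)
    (σ μ τ : ℝ) (hσ : 0 < σ) (hμ : 0 < μ)
    (A₁ : Matrix (Fin (N - 1)) (Fin (N - 1)) ℝ)
    (hA₁ : A₁ = (-((N : ℝ) * σ / ((N : ℝ) - 1))) •
        ((1 : Matrix (Fin (N - 1)) (Fin (N - 1)) ℝ) - ((1 : ℝ) / (N : ℝ)) • onesMat (N - 1)))
    (c : ℝ) (hc : c = σ / (((N : ℝ) - 1) * (σ + μ))) :
    IsUnit ((1 + c) • (1 : Matrix (Fin (N - 1)) (Fin (N - 1)) ℝ) - c • onesMat (N - 1)) ∧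
    (1 / ((N : ℝ) - 1)) *
        (onesRow (N - 1) * NormedSpace.exp (τ • A₁) *
          ((1 + c) • (1 : Matrix (Fin (N - 1)) (Fin (N - 1)) ℝ) - c • onesMat (N - 1))⁻¹ *
          onesCol (N - 1)) 0 0
      = Real.exp (-(σ * τ) / ((N : ℝ) - 1)) * ((N : ℝ) - 1) * (σ + μ)
          / (σ + μ * ((N : ℝ) - 1)) := by
  have hK : ((N - 1 : ℕ) : ℝ) = (N : ℝ) - 1 := by rw [Nat.cast_sub (by omega), Nat.cast_one]
  have hK_pos : (0 : ℝ) < (N : ℝ) - 1 := by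
    rw [sub_pos, Nat.one_lt_cast]; omega
  have hF_eig :
      1 + c - c * (N - 1 : ℕ) = (σ + μ * ((N : ℝ) - 1)) / (((N : ℝ) - 1) * (σ + μ)) := by
    rw [hK, hc]; field_simp; ring
  have hF_eig_pos : 0 < 1 + c - c * (N - 1 : ℕ) := by rw [hF_eig]; positivity
  have hF_unit := isUnit_smul_one_sub_smul_onesMat (by rw [hc]; positivity) hF_eig_pos.ne'
  refine ⟨hF_unit, ?_⟩
  have hF_inv := Matrix.inv_mul_of_mul_eq_smul hF_unit hF_eig_pos.ne'
    (smul_one_sub_smul_onesMat_mul_onesCol _ _)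
  have hA_eig : τ • A₁ * onesCol (N - 1) = (-(σ * τ) / ((N : ℝ) - 1)) • onesCol (N - 1) := by
    have h := smul_one_sub_smul_onesMat_mul_onesCol (K := N - 1) 1 (1 / N)
    rw [one_smul] at h
    rw [hA₁, Matrix.smul_mul, Matrix.smul_mul, h, smul_smul, smul_smul, hK]
    congr 1
    field_simp
    ring
  rw [Matrix.mul_assoc _ _⁻¹, hF_inv, Matrix.mul_smul, Matrix.mul_assoc,
    Matrix.exp_mul_of_mul_eq_smul hA_eig, Matrix.mul_smul, Matrix.smul_apply, Matrix.smul_apply,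
    onesRow_mul_onesCol, hF_eig, hK, ← Real.exp_eq_exp_ℝ, smul_eq_mul, smul_eq_mul]
  field_simp

/-- Expected number of transmissions per cycle for the ST policy on a symmetric
`N`-state source:
`(1/(N−1))·𝟙ᵀ·exp(τ•A₁)·F·𝟙 = e^{−στ/(N−1)}·(N−1)(σ+μ)/(σ+μ(N−1))`. -/
theorem st_symmetric_transmission_count (N : ℕ) (hN : 2 ≤ N)
    (σ μ τ : ℝ) (hσ : 0 < σ) (hμ : 0 < μ) (hτ : 0 ≤ τ)
    (A₁ : Matrix (Fin (N - 1)) (Fin (N - 1)) ℝ)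
    (hA₁ : A₁ = (-((N : ℝ) * σ / ((N : ℝ) - 1))) •
        ((1 : Matrix (Fin (N - 1)) (Fin (N - 1)) ℝ) - ((1 : ℝ) / (N : ℝ)) • onesMat (N - 1)))
    (c : ℝ) (hc : c = σ / (((N : ℝ) - 1) * (σ + μ))) :
    IsUnit ((1 + c) • (1 : Matrix (Fin (N - 1)) (Fin (N - 1)) ℝ) - c • onesMat (N - 1)) ∧
    (1 / ((N : ℝ) - 1)) *
        (onesRow (N - 1) * NormedSpace.exp (τ • A₁) *
          ((1 + c) • (1 : Matrix (Fin (N - 1)) (Fin (N - 1)) ℝ) - c • onesMat (N - 1))⁻¹ *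
          onesCol (N - 1)) 0 0
      = Real.exp (-(σ * τ) / ((N : ℝ) - 1)) * ((N : ℝ) - 1) * (σ + μ)
          / (σ + μ * ((N : ℝ) - 1)) :=
  st_symmetric_transmission_count_general N hN σ μ τ hσ hμ A₁ hA₁ c hc
end

section
/- Let σ > 0, μ > 0, and τ ≥ 0 be real numbers. Then the expected accumulated age of incorrect information per cycle for a binary continuous-time Markov source under a threshold-τ transmission policy satisfies the scalar identity ∫_0^τ (t²/2)·σ·e^{−σ·t} dt + ∫_τ^∞ (t²/2)·(σ+μ)·e^{−σ·τ}·e^{−(σ+μ)·(t−τ)} dt = τ·e^{−σ·τ}/(σ+μ) − τ·e^{−σ·τ}/σ + e^{−σ·τ}/(σ+μ)² − e^{−σ·τ}/σ² + 1/σ², and in particular both integrals converge. -/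
/-!
Both integrals are computed with the primitive `-(t²/2 + t/c + 1/c²) e^{-c(t-a)}` of
`(t²/2) c e^{-c(t-a)}`; on `[τ, ∞)` this is applied with rate `c = σ + μ` after pulling out the
factor `e^{-στ}`, and the primitive vanishes at infinity because exponential decay beats
polynomial growth.
-/

open MeasureTheory Filter Topology Set Real

noncomputable section

def halfSqExpPrimitive (c a t : ℝ) : ℝ :=
  -(t ^ 2 / 2 + t / c + 1 / c ^ 2) * exp (-c * (t - a))

variable {c : ℝ}

theorem hasDerivAt_halfSqExpPrimitive (a t : ℝ) (hc : c ≠ 0) :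
    HasDerivAt (halfSqExpPrimitive c a) (t ^ 2 / 2 * c * exp (-c * (t - a))) t := by
  have hpoly : HasDerivAt (fun t : ℝ => -(t ^ 2 / 2 + t / c + 1 / c ^ 2)) (-(t + 1 / c)) t := by
    refine ((((hasDerivAt_pow 2 t).div_const 2).add
      ((hasDerivAt_id t).div_const c)).add_const (1 / c ^ 2)).neg.congr_deriv ?_
    simp
  have hexp : HasDerivAt (fun t : ℝ => exp (-c * (t - a))) (exp (-c * (t - a)) * -c) t :=
    (((hasDerivAt_id t).sub_const a).const_mul (-c)).exp.congr_deriv (by simp)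
  refine (hpoly.mul hexp).congr_deriv ?_
  field_simp
  ring

theorem tendsto_pow_mul_exp_neg_mul_atTop_nhds_zero (n : ℕ) (hc : 0 < c) :
    Tendsto (fun t : ℝ => t ^ n * exp (-c * t)) atTop (𝓝 0) := by
  simpa [rpow_natCast] using tendsto_rpow_mul_exp_neg_mul_atTop_nhds_zero n c hc

theorem tendsto_halfSqExpPrimitive_atTop (a : ℝ) (hc : 0 < c) :
    Tendsto (halfSqExpPrimitive c a) atTop (𝓝 0) := by
  have hlim := ((((tendsto_pow_mul_exp_neg_mul_atTop_nhds_zero 2 hc).const_mul (1 / 2)).add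
    ((tendsto_pow_mul_exp_neg_mul_atTop_nhds_zero 1 hc).const_mul (1 / c))).add
    ((tendsto_pow_mul_exp_neg_mul_atTop_nhds_zero 0 hc).const_mul (1 / c ^ 2))).neg.mul_const
    (exp (c * a))
  simp only [mul_zero, add_zero, neg_zero, zero_mul] at hlim
  refine hlim.congr fun t => ?_
  rw [halfSqExpPrimitive, show -c * (t - a) = -c * t + c * a by ring, exp_add]
  ring

theorem intervalIntegral_halfSq_mul_exp (b : ℝ) (hc : c ≠ 0) :
    ∫ t in (0 : ℝ)..b, t ^ 2 / 2 * c * exp (-c * t) =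
      -(b ^ 2 / 2 + b / c + 1 / c ^ 2) * exp (-c * b) + 1 / c ^ 2 := by
  have hderiv (t : ℝ) : HasDerivAt (halfSqExpPrimitive c 0) (t ^ 2 / 2 * c * exp (-c * t)) t := by
    simpa using hasDerivAt_halfSqExpPrimitive 0 t hc
  rw [intervalIntegral.integral_eq_sub_of_hasDerivAt (fun t _ => hderiv t)
    (Continuous.intervalIntegrable (by fun_prop) _ _)]
  simp [halfSqExpPrimitive]

theorem integrableOn_halfSq_mul_exp_Ioi (a : ℝ) (hc : 0 < c) :
    IntegrableOn (fun t => t ^ 2 / 2 * c * exp (-c * (t - a))) (Ioi a) :=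
  integrableOn_Ioi_deriv_of_nonneg' (fun t _ => hasDerivAt_halfSqExpPrimitive a t hc.ne')
    (fun t _ => by positivity) (tendsto_halfSqExpPrimitive_atTop a hc)

theorem integral_halfSq_mul_exp_Ioi (a : ℝ) (hc : 0 < c) :
    ∫ t in Ioi a, t ^ 2 / 2 * c * exp (-c * (t - a)) = a ^ 2 / 2 + a / c + 1 / c ^ 2 := by
  rw [integral_Ioi_of_hasDerivAt_of_nonneg' (fun t _ => hasDerivAt_halfSqExpPrimitive a t hc.ne')
    (fun t _ => by positivity) (tendsto_halfSqExpPrimitive_atTop a hc)]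
  simp [halfSqExpPrimitive]

end

theorem binary_threshold_aoii_general (σ μ τ : ℝ) (hσ : 0 < σ) (hμ : 0 < μ) :
    IntervalIntegrable (fun t : ℝ => (t ^ 2 / 2) * σ * Real.exp (-σ * t)) volume 0 τ ∧
    IntegrableOn
      (fun t : ℝ =>
        (t ^ 2 / 2) * (σ + μ) * Real.exp (-σ * τ) * Real.exp (-(σ + μ) * (t - τ)))
      (Set.Ici τ) ∧
    (∫ t in (0:ℝ)..τ, (t ^ 2 / 2) * σ * Real.exp (-σ * t))
      + ∫ t in Set.Ici τ,
          (t ^ 2 / 2) * (σ + μ) * Real.exp (-σ * τ) * Real.exp (-(σ + μ) * (t - τ))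
      = τ * Real.exp (-σ * τ) / (σ + μ) - τ * Real.exp (-σ * τ) / σ
        + Real.exp (-σ * τ) / (σ + μ) ^ 2 - Real.exp (-σ * τ) / σ ^ 2 + 1 / σ ^ 2 := by
  have hrate : 0 < σ + μ := add_pos hσ hμ
  have hfactor : (fun t : ℝ =>
      (t ^ 2 / 2) * (σ + μ) * exp (-σ * τ) * exp (-(σ + μ) * (t - τ))) =
      fun t => exp (-σ * τ) * (t ^ 2 / 2 * (σ + μ) * exp (-(σ + μ) * (t - τ))) := by
    ext t
    ring
  rw [hfactor, integrableOn_Ici_iff_integrableOn_Ioi, integral_Ici_eq_integral_Ioi,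
    integral_const_mul, integral_halfSq_mul_exp_Ioi τ hrate,
    intervalIntegral_halfSq_mul_exp τ hσ.ne']
  refine ⟨Continuous.intervalIntegrable (by fun_prop) _ _,
    (integrableOn_halfSq_mul_exp_Ioi τ hrate).const_mul _, ?_⟩
  field_simp
  ring

/-- Expected accumulated age of incorrect information per cycle for a binary CTMC
source under a threshold-`τ` transmission policy. -/
theorem binary_threshold_aoii (σ μ τ : ℝ) (hσ : 0 < σ) (hμ : 0 < μ) (hτ : 0 ≤ τ) :
    IntervalIntegrable (fun t : ℝ => (t ^ 2 / 2) * σ * Real.exp (-σ * t)) volume 0 τ ∧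
    IntegrableOn
      (fun t : ℝ =>
        (t ^ 2 / 2) * (σ + μ) * Real.exp (-σ * τ) * Real.exp (-(σ + μ) * (t - τ)))
      (Set.Ici τ) ∧
    (∫ t in (0:ℝ)..τ, (t ^ 2 / 2) * σ * Real.exp (-σ * t))
      + ∫ t in Set.Ici τ,
          (t ^ 2 / 2) * (σ + μ) * Real.exp (-σ * τ) * Real.exp (-(σ + μ) * (t - τ))
      = τ * Real.exp (-σ * τ) / (σ + μ) - τ * Real.exp (-σ * τ) / σ
        + Real.exp (-σ * τ) / (σ + μ) ^ 2 - Real.exp (-σ * τ) / σ ^ 2 + 1 / σ ^ 2 :=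
  binary_threshold_aoii_general σ μ τ hσ hμ
end
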